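/- arXiv:2604.19450 — 2 statements merged into one kernel-verified Lean document; each statement's English description precedes it below -/
import Mathlib

section
/- Let X be finite in ℝ^d, S = {s_1,…,s_m} with cover radius r and cells P_i containing their own seeds (s_i ∈ P_i). If ℓ_i ∈ P_i is a nearest point of P_i to z_i = (1−α_i)s_i + α_i c_i with c_i ∈ conv(P_i) and α_i ≤ α_max, then L = {ℓ_1,…,ℓ_m} is a (1+2α_max)·r-cover of X. -/
/-- Projected partial recentering with seeds in their own cells gives a
(1+2·α_max)·r-cover of X. -/
theorem projected_partial_recentering_universal_cover {d m : ℕ} [NeZero m]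
    (X : Finset (EuclideanSpace ℝ (Fin d))) (hX : X.Nonempty)
    (s : Fin m → EuclideanSpace ℝ (Fin d)) (hs : ∀ i, s i ∈ X)
    (r : ℝ)
    (hr : r = X.sup' hX fun x =>
      Finset.univ.inf' Finset.univ_nonempty fun j => dist x (s j))
    (c : Fin m → EuclideanSpace ℝ (Fin d))
    (hc : ∀ i, c i ∈ convexHull ℝ
      {x : EuclideanSpace ℝ (Fin d) | x ∈ X ∧ ∀ j, dist x (s i) ≤ dist x (s j)})
    (αmax : ℝ) (hαmax : αmax ∈ Set.Icc (0 : ℝ) 1)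
    (a : Fin m → ℝ) (ha : ∀ i, a i ∈ Set.Icc (0 : ℝ) αmax)
    (z : Fin m → EuclideanSpace ℝ (Fin d))
    (hz : ∀ i, z i = (1 - a i) • s i + a i • c i)
    (ℓ : Fin m → EuclideanSpace ℝ (Fin d))
    (hℓ : ∀ i, (ℓ i ∈ X ∧ ∀ j, dist (ℓ i) (s i) ≤ dist (ℓ i) (s j)) ∧
      ∀ p, p ∈ X → (∀ j, dist p (s i) ≤ dist p (s j)) →
        dist (z i) (ℓ i) ≤ dist (z i) p) :
    ∀ x ∈ X, ∃ i, dist x (ℓ i) ≤ (1 + 2 * αmax) * r := by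
  intro x hx
  obtain ⟨i, -, hi⟩ := Finset.exists_min_image Finset.univ (fun j => dist x (s j))
    Finset.univ_nonempty
  refine ⟨i, ?_⟩
  -- basic facts
  have hboundP : ∀ p : EuclideanSpace ℝ (Fin d), p ∈ X →
      (∀ j, dist p (s i) ≤ dist p (s j)) → dist p (s i) ≤ r := by
    intro p hp hpj
    have h1 : dist p (s i) ≤ Finset.univ.inf' Finset.univ_nonempty fun j => dist p (s j) :=
      Finset.le_inf' _ _ (fun j _ => hpj j)
    have h2 : (Finset.univ.inf' Finset.univ_nonempty fun j => dist p (s j)) ≤ r := by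
      rw [hr]
      exact Finset.le_sup' (fun y => Finset.univ.inf' Finset.univ_nonempty
        fun j => dist y (s j)) hp
    linarith
  have hxr : dist x (s i) ≤ r := by
    have h1 : dist x (s i) ≤ Finset.univ.inf' Finset.univ_nonempty fun j => dist x (s j) :=
      Finset.le_inf' _ _ (fun j hj => hi j hj)
    have h2 : (Finset.univ.inf' Finset.univ_nonempty fun j => dist x (s j)) ≤ r := by
      rw [hr]
      exact Finset.le_sup' (fun y => Finset.univ.inf' Finset.univ_nonempty
        fun j => dist y (s j)) hx
    linarith
  have hr0 : 0 ≤ r := le_trans dist_nonneg hxr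
  -- c i is within r of s i
  have hcr : dist (c i) (s i) ≤ r := by
    have hsub : {x : EuclideanSpace ℝ (Fin d) | x ∈ X ∧ ∀ j, dist x (s i) ≤ dist x (s j)}
        ⊆ Metric.closedBall (s i) r := by
      intro p hp
      exact hboundP p hp.1 hp.2
    have := convexHull_min hsub (convex_closedBall (s i) r) (hc i)
    rwa [Metric.mem_closedBall] at this
  -- dist z i to s i
  have hzs : dist (z i) (s i) = a i * dist (c i) (s i) := by
    have hsub : z i - s i = a i • (c i - s i) := by
      rw [hz i]; module
    have ha0 : (0:ℝ) ≤ a i := (ha i).1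
    rw [dist_eq_norm, hsub, norm_smul, dist_eq_norm, Real.norm_eq_abs, abs_of_nonneg ha0]
  have hzℓ : dist (z i) (ℓ i) ≤ dist (z i) (s i) :=
    (hℓ i).2 (s i) (hs i) (fun j => by simpa [dist_self] using dist_nonneg)
  have haαr : a i * dist (c i) (s i) ≤ αmax * r := by
    have := (ha i).2
    have := (ha i).1
    have := dist_nonneg (x := c i) (y := s i)
    nlinarith
  calc dist x (ℓ i) ≤ dist x (s i) + dist (s i) (z i) + dist (z i) (ℓ i) := by
        have := dist_triangle4 x (s i) (z i) (ℓ i); linarith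
    _ ≤ r + αmax * r + αmax * r := by
        have hcr' : dist (c i) (s i) ≤ r := by first | exact hcr | (rw [dist_comm]; exact hcr)
        have h2 : dist (z i) (s i) ≤ αmax * r := by
          rw [hzs]
          nlinarith [(ha i).1, (ha i).2, hcr', hr0,
            dist_nonneg (x := c i) (y := s i)]
        have h1 : dist (s i) (z i) ≤ αmax * r := by rwa [dist_comm]
        linarith
    _ = (1 + 2 * αmax) * r := by ring
end

section
/- Let X be finite in ℝ^d with seed set S of cover radius r, cells P_i containing their own seeds, and projected partial-recentering landmarks ℓ_i ∈ P_i as above with step bound α_max ∈ [0,1]. Then L = {ℓ_1,…,ℓ_m} is a min{2, 1+2α_max}·r-cover of X; in particular, if α_max ≤ 1/2 the bound (1+2α_max)r improves on 2r. -/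
/-- The projected partial-recentering landmarks form a
min{2, 1+2·α_max}·r-cover of X. -/
theorem projected_partial_recentering_min_cover {d m : ℕ} [NeZero m]
    (X : Finset (EuclideanSpace ℝ (Fin d))) (hX : X.Nonempty)
    (s : Fin m → EuclideanSpace ℝ (Fin d)) (hs : ∀ i, s i ∈ X)
    (r : ℝ)
    (hr : r = X.sup' hX fun x =>
      Finset.univ.inf' Finset.univ_nonempty fun j => dist x (s j))
    (c : Fin m → EuclideanSpace ℝ (Fin d))
    (hc : ∀ i, c i ∈ convexHull ℝ
      {x : EuclideanSpace ℝ (Fin d) | x ∈ X ∧ ∀ j, dist x (s i) ≤ dist x (s j)})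
    (αmax : ℝ) (hαmax : αmax ∈ Set.Icc (0 : ℝ) 1)
    (a : Fin m → ℝ) (ha : ∀ i, a i ∈ Set.Icc (0 : ℝ) αmax)
    (z : Fin m → EuclideanSpace ℝ (Fin d))
    (hz : ∀ i, z i = (1 - a i) • s i + a i • c i)
    (ℓ : Fin m → EuclideanSpace ℝ (Fin d))
    (hℓ : ∀ i, (ℓ i ∈ X ∧ ∀ j, dist (ℓ i) (s i) ≤ dist (ℓ i) (s j)) ∧
      ∀ p, p ∈ X → (∀ j, dist p (s i) ≤ dist p (s j)) →
        dist (z i) (ℓ i) ≤ dist (z i) p) :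
    ∀ x ∈ X, ∃ i, dist x (ℓ i) ≤ min 2 (1 + 2 * αmax) * r := by
  intro x hx
  -- every point of X is within r of *every* nearest seed, and
  -- general fact: any point at min-distance has dist ≤ r
  have hinf_le_r : ∀ p ∈ X,
      (Finset.univ.inf' Finset.univ_nonempty fun j => dist p (s j)) ≤ r := by
    intro p hp
    rw [hr]
    exact Finset.le_sup' (fun q => Finset.univ.inf' Finset.univ_nonempty fun j => dist q (s j)) hp
  have hcell_r : ∀ p ∈ X, ∀ i, (∀ j, dist p (s i) ≤ dist p (s j)) →
      dist p (s i) ≤ r := by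
    intro p hp i hpi
    have h1 : dist p (s i) ≤ Finset.univ.inf' Finset.univ_nonempty
        fun j => dist p (s j) := Finset.le_inf' _ _ fun j _ => hpi j
    exact h1.trans (hinf_le_r p hp)
  -- choose the nearest seed to x
  obtain ⟨i, -, hi⟩ := Finset.exists_mem_eq_inf' (Finset.univ_nonempty)
    (fun j => dist x (s j))
  refine ⟨i, ?_⟩
  have hmin : ∀ j, dist x (s i) ≤ dist x (s j) := by
    intro j
    rw [← hi]
    exact Finset.inf'_le _ (Finset.mem_univ j)
  have hxr : dist x (s i) ≤ r := hcell_r x hx i hmin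
  have hr0 : 0 ≤ r := le_trans dist_nonneg hxr
  have hai := ha i
  have ha0 : 0 ≤ a i := hai.1
  have ha1 : a i ≤ 1 := hai.2.trans hαmax.2
  -- the cell lies in the closed ball of radius r around s i
  have hcsub : {y : EuclideanSpace ℝ (Fin d) | y ∈ X ∧ ∀ j, dist y (s i) ≤ dist y (s j)}
      ⊆ Metric.closedBall (s i) r := by
    intro p hp
    exact Metric.mem_closedBall.2 (hcell_r p hp.1 i hp.2)
  have hcr : dist (c i) (s i) ≤ r :=
    convexHull_min hcsub (convex_closedBall _ _) (hc i)
  -- the cell lies in the closed ball of radius 2r around x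
  have hcsub2 : {y : EuclideanSpace ℝ (Fin d) | y ∈ X ∧ ∀ j, dist y (s i) ≤ dist y (s j)}
      ⊆ Metric.closedBall x (2 * r) := by
    intro p hp
    have : dist p x ≤ dist p (s i) + dist (s i) x :=
      dist_triangle _ _ _
    have h2 : dist (s i) x ≤ r := by rw [dist_comm]; exact hxr
    have h3 : dist p (s i) ≤ r := hcell_r p hp.1 i hp.2
    exact Metric.mem_closedBall.2 (by linarith)
  have hxc : dist (c i) x ≤ 2 * r :=
    convexHull_min hcsub2 (convex_closedBall _ _) (hc i)
  -- dist (z i) (s i) = a i * dist (c i) (s i)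
  have hzs : dist (z i) (s i) ≤ a i * r := by
    have hdiff : z i - s i = a i • (c i - s i) := by rw [hz i]; module
    have : dist (z i) (s i) = a i * dist (c i) (s i) := by
      rw [dist_eq_norm, hdiff, norm_smul, Real.norm_eq_abs, abs_of_nonneg ha0,
        ← dist_eq_norm]
    rw [this]
    exact mul_le_mul_of_nonneg_left hcr ha0
  -- dist x (z i) ≤ (1 - a i) * r + a i * (2 * r)
  have hxz : dist x (z i) ≤ (1 + a i) * r := by
    have hdiff : x - z i = (1 - a i) • (x - s i) + a i • (x - c i) := by
      rw [hz i]; module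
    have h1 : dist x (z i) ≤ (1 - a i) * dist x (s i) + a i * dist x (c i) := by
      rw [dist_eq_norm, hdiff]
      calc ‖(1 - a i) • (x - s i) + a i • (x - c i)‖
          ≤ ‖(1 - a i) • (x - s i)‖ + ‖a i • (x - c i)‖ := norm_add_le _ _
        _ = (1 - a i) * ‖x - s i‖ + a i * ‖x - c i‖ := by
            rw [norm_smul, norm_smul, Real.norm_eq_abs, Real.norm_eq_abs,
              abs_of_nonneg ha0, abs_of_nonneg (by linarith : (0:ℝ) ≤ 1 - a i)]
        _ = (1 - a i) * dist x (s i) + a i * dist x (c i) := by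
            rw [dist_eq_norm, dist_eq_norm]
    have hxc' : dist x (c i) ≤ 2 * r := by rw [dist_comm]; exact hxc
    have := mul_le_mul_of_nonneg_left hxr (by linarith : (0:ℝ) ≤ 1 - a i)
    have := mul_le_mul_of_nonneg_left hxc' ha0
    nlinarith
  -- projection optimality: dist (z i) (ℓ i) ≤ dist (z i) (s i)
  have hproj : dist (z i) (ℓ i) ≤ dist (z i) (s i) :=
    (hℓ i).2 (s i) (hs i) (fun j => by simpa using dist_nonneg)
  -- bound 1 : 2r
  have hb1 : dist x (ℓ i) ≤ 2 * r := by
    have hls : dist (ℓ i) (s i) ≤ r := hcell_r (ℓ i) (hℓ i).1.1 i (hℓ i).1.2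
    have := dist_triangle x (s i) (ℓ i)
    have h2 : dist (s i) (ℓ i) = dist (ℓ i) (s i) := dist_comm _ _
    linarith
  -- bound 2 : (1 + 2 αmax) r
  have hb2 : dist x (ℓ i) ≤ (1 + 2 * αmax) * r := by
    have := dist_triangle x (z i) (ℓ i)
    have hzl : dist (z i) (ℓ i) ≤ a i * r := hproj.trans hzs
    have haa : a i * r ≤ αmax * r := mul_le_mul_of_nonneg_right hai.2 hr0
    nlinarith
  have : min 2 (1 + 2 * αmax) * r = min (2 * r) ((1 + 2 * αmax) * r) :=
    (min_mul_of_nonneg _ _ hr0).symm ▸ rfl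
  rw [min_mul_of_nonneg _ _ hr0]
  exact le_min hb1 hb2
end
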